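/- (Norm rate under p-convexity.) Under the hypotheses of the p-convexity rate theorem — R proper convex with ξ† = (F*F)^ν ω† ∈ ∂R(u†), 0 < ν < 1/2, p ≥ 1, Fu† = v†, C₀‖w − u†‖^p ≤ D_{ξ†}(w, u†) for ‖w − u†‖ ≤ M, and parameter choice α(δ) = c·δ^((2p−2−2pν+4ν)/(p−1+2ν)) — there exists C > 0 such that for all δ > 0, every v^δ with ‖v† − v^δ‖ ≤ δ, and every minimiser u_α^δ of the Tikhonov functional with ‖u_α^δ − u†‖ ≤ M, one has the norm estimate ‖u_α^δ − u†‖ ≤ C·δ^(2ν/(p−1+2ν)). -/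

import Mathlib

/-!
Write `e = u - u†` and `t = ‖F u - v^δ‖`. Comparing the minimiser with `u†` in the Tikhonov
functional and bounding the Bregman distance below by `p`-convexity gives
`t²/2 + α C₀ ‖e‖^p ≤ δ²/2 - α ⟪ξ†, e⟫`. By the source condition, `⟪ξ†, e⟫ = ⟪ω†, (F*F)^ν e⟫`,
and the interpolation inequality `‖(F*F)^ν e‖ ≤ ‖F e‖^(2ν) ‖e‖^(1-2ν)` (weighted AM-GM
`x^(2ν) a^(4ν) b^(2-4ν) ≤ 2ν a² x + (1-2ν) b²` on the spectrum, pushed through the functional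
calculus) bounds the last term by `α ‖ω†‖ (t + δ)^(2ν) ‖e‖^(1-2ν)`. For the chosen `α` the
resulting inequality is invariant under `t = δ τ`, `‖e‖ = δ^(2ν/(p-1+2ν)) η`, and in the rescaled
variables `η^p` on the left dominates the right-hand side, which grows sublinearly; hence `η` is
bounded independently of `δ`.
-/

open ContinuousLinearMap
open scoped RealInnerProductSpace

noncomputable section

/-- `P` is the fractional power `T ^ ν` of the (positive self-adjoint) operator `T`, defined
via the continuous functional calculus: there is a continuous star-algebra homomorphism from
`C(σ(T), ℝ)` to the bounded operators mapping the identity function to `T` (such a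
homomorphism is unique by Stone–Weierstrass), and `P` is the image of (a continuous extension
of) the function `x ↦ x ^ ν`. -/
def IsFractionalPower {W : Type*} [NormedAddCommGroup W] [InnerProductSpace ℝ W]
    [CompleteSpace W] (T : W →L[ℝ] W) (ν : ℝ) (P : W →L[ℝ] W) : Prop :=
  ∃ Φ : C(spectrum ℝ T, ℝ) →⋆ₐ[ℝ] (W →L[ℝ] W),
    Continuous Φ ∧
    Φ ((ContinuousMap.id ℝ).restrict (spectrum ℝ T)) = T ∧
    ∃ f : C(ℝ, ℝ), (∀ x ∈ spectrum ℝ T, f x = x ^ ν) ∧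
      Φ (f.restrict (spectrum ℝ T)) = P

/-- `ξ` is a subgradient of the extended-real-valued functional `R` at `u`:
`R u < +∞` and `R w ≥ R u + ⟪ξ, w - u⟫` for all `w`. -/
def IsSubgradient {U : Type*} [NormedAddCommGroup U] [InnerProductSpace ℝ U]
    (R : U → EReal) (ξ u : U) : Prop :=
  R u < ⊤ ∧ ∀ w, R u + ((⟪ξ, w - u⟫ : ℝ) : EReal) ≤ R w

/-- Convexity for extended-real-valued functionals. -/
def ErealConvexOn {U : Type*} [NormedAddCommGroup U] [InnerProductSpace ℝ U]
    (R : U → EReal) : Prop :=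
  ∀ u w : U, ∀ t : ℝ, 0 ≤ t → t ≤ 1 →
    R (t • u + (1 - t) • w) ≤ ((t : ℝ) : EReal) * R u + (((1 - t : ℝ)) : EReal) * R w

/-- The Bregman distance `D_ξ(w, u) = R w - R u - ⟪ξ, w - u⟫`. -/
def Breg {U : Type*} [NormedAddCommGroup U] [InnerProductSpace ℝ U]
    (R : U → EReal) (ξ w u : U) : EReal :=
  R w - R u - ((⟪ξ, w - u⟫ : ℝ) : EReal)

/-- The Tikhonov functional `T_α(u) = (1/2)‖F u - v‖² + α R(u)`. -/
def Tik {U V : Type*} [NormedAddCommGroup U] [InnerProductSpace ℝ U]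
    [NormedAddCommGroup V] [InnerProductSpace ℝ V]
    (F : U →L[ℝ] V) (R : U → EReal) (α : ℝ) (v : V) (u : U) : EReal :=
  (((1 : ℝ) / 2 * ‖F u - v‖ ^ 2 : ℝ) : EReal) + ((α : ℝ) : EReal) * R u

theorem sq_rpow_mul_rpow_mul_rpow_le {θ a b x : ℝ} (hθ0 : 0 ≤ θ) (hθ1 : θ ≤ 1) (ha : 0 ≤ a)
    (hb : 0 ≤ b) (hx : 0 ≤ x) :
    (a ^ θ * b ^ (1 - θ)) ^ 2 * x ^ θ ≤ θ * a ^ 2 * x + (1 - θ) * b ^ 2 := by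
  have hamgm := Real.geom_mean_le_arith_mean2_weighted hθ0 (sub_nonneg.mpr hθ1)
    (mul_nonneg (sq_nonneg a) hx) (sq_nonneg b) (add_sub_cancel θ 1)
  calc (a ^ θ * b ^ (1 - θ)) ^ 2 * x ^ θ = (a ^ 2 * x) ^ θ * (b ^ 2) ^ (1 - θ) := by
        rw [mul_pow, Real.rpow_pow_comm ha, Real.rpow_pow_comm hb,
          Real.mul_rpow (sq_nonneg a) hx]
        ring
    _ ≤ θ * a ^ 2 * x + (1 - θ) * b ^ 2 := by linarith

theorem le_rpow_of_mul_le_mul_rpow {κ L Z ε : ℝ} (hκ : 0 < κ) (hZ : 0 < Z) (hε : 0 < ε)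
    (h : κ * Z ≤ L * Z ^ (1 - ε)) : Z ≤ (L / κ) ^ (1 / ε) := by
  have hsplit : Z = Z ^ ε * Z ^ (1 - ε) := by
    rw [← Real.rpow_add hZ, add_sub_cancel, Real.rpow_one]
  have hZε : Z ^ ε ≤ L / κ := by
    rw [le_div_iff₀' hκ]
    refine le_of_mul_le_mul_right ?_ (Real.rpow_pos_of_pos hZ (1 - ε))
    rwa [mul_assoc, ← hsplit]
  calc Z = (Z ^ ε) ^ (1 / ε) := by
        rw [← Real.rpow_mul hZ.le, mul_one_div_cancel hε.ne', Real.rpow_one]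
    _ ≤ (L / κ) ^ (1 / ε) := by gcongr

theorem le_rpow_of_sq_add_rpow_le {p θ a K τ η : ℝ} (hp : 1 ≤ p) (hθ0 : 0 < θ) (hθ1 : θ ≤ 1)
    (ha : 0 < a) (hK : 0 ≤ K) (hτ : 0 ≤ τ) (hη : 0 ≤ η)
    (h : τ ^ 2 / 2 + a * η ^ p ≤ 1 / 2 + K * (η ^ (1 - θ) * (τ + 1) ^ θ)) :
    η ≤ ((1 + K) / min (1 / 4) a) ^ (2 / θ) := by
  -- `Z` dominates `η` and `(τ + 1) ^ 2`, and the right-hand side grows only like `Z ^ (1 - θ / 2)`.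
  set Z := (τ + 1) ^ 2 + η ^ p
  have hηp : 0 ≤ η ^ p := Real.rpow_nonneg hη p
  have hZ1 : 1 ≤ Z := by nlinarith
  have hηZ : η ≤ Z := by
    rcases le_total η 1 with h1 | h1
    · linarith
    · nlinarith [Real.self_le_rpow_of_one_le h1 hp]
  have hmix : η ^ (1 - θ) * (τ + 1) ^ θ ≤ Z ^ (1 - θ / 2) := by
    have hsq : (τ + 1) ^ θ = ((τ + 1) ^ 2) ^ (θ / 2) := by
      rw [← Real.rpow_natCast, ← Real.rpow_mul (by linarith)]
      ring_nf
    calc η ^ (1 - θ) * (τ + 1) ^ θ ≤ Z ^ (1 - θ) * Z ^ (θ / 2) := by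
          rw [hsq]
          gcongr
          linarith
      _ = Z ^ (1 - θ / 2) := by rw [← Real.rpow_add (by linarith)]; ring_nf
  have hκZ : min (1 / 4) a * Z ≤ (1 + K) * Z ^ (1 - θ / 2) := by
    have h1 : 1 ≤ Z ^ (1 - θ / 2) := Real.one_le_rpow hZ1 (by linarith)
    have h2 : min (1 / 4) a * Z ≤ (τ + 1) ^ 2 / 4 + a * η ^ p := by
      have := min_le_left (1 / 4 : ℝ) a
      have := min_le_right (1 / 4 : ℝ) a
      nlinarith [sq_nonneg (τ + 1)]
    nlinarith [sq_nonneg (τ - 1), mul_le_mul_of_nonneg_left hmix hK]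
  have := le_rpow_of_mul_le_mul_rpow (by positivity) (by linarith) (by linarith : 0 < θ / 2) hκZ
  rw [one_div_div] at this
  linarith

theorem le_mul_rpow_of_sq_add_rpow_le {p θ μ a K δ t E : ℝ} (hp : 1 ≤ p) (hθ0 : 0 < θ)
    (hθ1 : θ ≤ 1) (hμ : μ * (p - 1 + θ) = θ) (ha : 0 < a) (hK : 0 ≤ K) (hδ : 0 < δ)
    (ht : 0 ≤ t) (hE : 0 ≤ E)
    (h : t ^ 2 / 2 + δ ^ (2 - μ * p) * (a * E ^ p) ≤
      δ ^ 2 / 2 + δ ^ (2 - μ * p) * (K * (E ^ (1 - θ) * (t + δ) ^ θ))) :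
    E ≤ ((1 + K) / min (1 / 4) a) ^ (2 / θ) * δ ^ μ := by
  have hδμ : 0 < δ ^ μ := Real.rpow_pos_of_pos hδ μ
  set τ := t / δ
  set η := E / δ ^ μ
  have ht' : t = δ * τ := by simp only [τ]; field_simp
  have hE' : E = δ ^ μ * η := by simp only [η]; field_simp
  have hpow : δ ^ (2 - μ * p) * (δ ^ μ) ^ p = δ ^ 2 := by
    rw [← Real.rpow_mul hδ.le, ← Real.rpow_add hδ, sub_add_cancel, Real.rpow_two]
  have hmix : δ ^ (2 - μ * p) * ((δ ^ μ) ^ (1 - θ) * δ ^ θ) = δ ^ 2 := by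
    rw [← Real.rpow_mul hδ.le, ← Real.rpow_add hδ, ← Real.rpow_add hδ, ← Real.rpow_two]
    congr 1
    linear_combination -hμ
  have hη : 0 ≤ η := by positivity
  have hτ : 0 ≤ τ := by positivity
  have hscaled : δ ^ 2 * (τ ^ 2 / 2 + a * η ^ p) ≤
      δ ^ 2 * (1 / 2 + K * (η ^ (1 - θ) * (τ + 1) ^ θ)) := by
    rw [hE', ht', Real.mul_rpow hδμ.le hη, Real.mul_rpow hδμ.le hη,
      show δ * τ + δ = δ * (τ + 1) by ring, Real.mul_rpow hδ.le (by positivity)] at h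
    linear_combination h - a * η ^ p * hpow + K * η ^ (1 - θ) * (τ + 1) ^ θ * hmix
  have := le_rpow_of_sq_add_rpow_le hp hθ0 hθ1 ha hK hτ hη
    (le_of_mul_le_mul_left hscaled (by positivity))
  rw [hE', mul_comm]
  exact mul_le_mul_of_nonneg_right this hδμ.le

section FunctionalCalculus

variable {U : Type*} [NormedAddCommGroup U] [InnerProductSpace ℝ U] [CompleteSpace U]

theorem StarAlgHom.isPositive_apply_of_nonneg {X : Type*} [TopologicalSpace X]
    (Φ : C(X, ℝ) →⋆ₐ[ℝ] (U →L[ℝ] U)) {g : C(X, ℝ)} (hg : 0 ≤ g) : (Φ g).IsPositive := by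
  set h : C(X, ℝ) := ⟨fun x => √(g x), by fun_prop⟩
  have hg' : g = star h * h := by
    ext x
    simp only [h, star_trivial, ContinuousMap.mul_apply, ContinuousMap.coe_mk]
    exact (Real.mul_self_sqrt (hg x)).symm
  rw [hg', map_mul, map_star, star_eq_adjoint]
  exact isPositive_adjoint_comp_self (Φ h)

theorem StarAlgHom.monotone_of_continuousMap {X : Type*} [TopologicalSpace X]
    (Φ : C(X, ℝ) →⋆ₐ[ℝ] (U →L[ℝ] U)) : Monotone Φ := fun _ _ h => by
  rw [le_def, ← map_sub]
  exact Φ.isPositive_apply_of_nonneg (sub_nonneg.mpr h)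

namespace IsFractionalPower

variable {T P : U →L[ℝ] U} {ν : ℝ}

theorem adjoint_eq (hP : IsFractionalPower T ν P) : adjoint P = P := by
  obtain ⟨Φ, -, -, f, -, rfl⟩ := hP
  rw [← star_eq_adjoint, ← map_star, star_trivial]

theorem norm_apply_le (hP : IsFractionalPower T ν P) (hT : T.IsPositive) (hν0 : 0 ≤ ν)
    (hν1 : ν ≤ 1 / 2) {e : U} {b : ℝ} (hb : 0 < b) (hTe : ⟪T e, e⟫ ≤ b ^ 2) :
    ‖P e‖ ≤ b ^ (2 * ν) * ‖e‖ ^ (1 - 2 * ν) := by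
  have hPsa := hP.adjoint_eq
  obtain ⟨Φ, -, hΦT, f, hf, hfP⟩ := hP
  rcases eq_or_ne e 0 with rfl | he
  · simp only [map_zero, norm_zero]
    positivity
  set θ := 2 * ν
  set a := ‖e‖
  have ha : 0 < a := norm_pos_iff.mpr he
  set c := a ^ θ * b ^ (1 - θ)
  have hc : 0 < c := by positivity
  have hle : c ^ 2 • (f.restrict (spectrum ℝ T)) ^ 2 ≤
      (θ * a ^ 2) • (ContinuousMap.id ℝ).restrict (spectrum ℝ T) + ((1 - θ) * b ^ 2) • 1 := by
    intro x
    have hx : 0 ≤ (x : ℝ) := spectrum_nonneg_of_nonneg ((nonneg_iff_isPositive T).mpr hT) x.2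
    simp only [ContinuousMap.toFun_eq_coe, ContinuousMap.coe_smul, ContinuousMap.coe_pow,
      ContinuousMap.coe_restrict, Pi.smul_apply, Pi.pow_apply, Set.domRestrict_apply, smul_eq_mul,
      ContinuousMap.add_apply, ContinuousMap.coe_id, Set.domRestrict_id, ContinuousMap.coe_one,
      Pi.one_apply, mul_one]
    rw [hf x x.2, ← Real.rpow_mul_natCast hx, Nat.cast_ofNat, mul_comm ν]
    exact sq_rpow_mul_rpow_mul_rpow_le (θ := θ) (by positivity) (by linarith) ha.le hb.le hx
  have key := (Φ.monotone_of_continuousMap hle).inner_nonneg_left e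
  rw [sub_apply, inner_sub_left, sub_nonneg, map_smul, map_pow, hfP, map_add, map_smul, map_smul,
    hΦT, map_one, smul_apply, pow_two P, mul_apply_eq_comp, add_apply, smul_apply, smul_apply,
    one_apply_eq_self, inner_add_left, real_inner_smul_left, real_inner_smul_left,
    real_inner_smul_left, ← adjoint_inner_right, hPsa, real_inner_self_eq_norm_sq,
    real_inner_self_eq_norm_sq] at key
  have hsq : (c * ‖P e‖) ^ 2 ≤ (a * b) ^ 2 := by
    have : θ * a ^ 2 * ⟪T e, e⟫ ≤ θ * a ^ 2 * b ^ 2 := by gcongr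
    nlinarith
  have hab : a * b = c * (b ^ θ * a ^ (1 - θ)) := by
    have ha' : a ^ θ * a ^ (1 - θ) = a := by
      rw [← Real.rpow_add ha, add_sub_cancel, Real.rpow_one]
    have hb' : b ^ (1 - θ) * b ^ θ = b := by
      rw [← Real.rpow_add hb, sub_add_cancel, Real.rpow_one]
    calc a * b = a ^ θ * a ^ (1 - θ) * (b ^ (1 - θ) * b ^ θ) := by rw [ha', hb']
      _ = c * (b ^ θ * a ^ (1 - θ)) := by ring
  rw [← mul_le_mul_iff_right₀ hc, ← hab]
  exact (pow_le_pow_iff_left₀ (by positivity) (by positivity) two_ne_zero).mp hsq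

end IsFractionalPower

end FunctionalCalculus

theorem tik_minimizer_le {U V : Type*} [NormedAddCommGroup U] [InnerProductSpace ℝ U]
    [NormedAddCommGroup V] [InnerProductSpace ℝ V] {F : U →L[ℝ] V} {R : U → EReal} {α : ℝ}
    {v : V} {u w ξ : U} {d : ℝ} (hα : 0 < α) (hRbot : ∀ u, R u ≠ ⊥) (hRw : R w ≠ ⊤)
    (hmin : ∀ u', Tik F R α v u ≤ Tik F R α v u') (hd : (d : EReal) ≤ Breg R ξ u w) :
    1 / 2 * ‖F u - v‖ ^ 2 + α * d ≤ 1 / 2 * ‖F w - v‖ ^ 2 - α * ⟪ξ, u - w⟫ := by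
  obtain ⟨r, hr⟩ : ∃ r : ℝ, (r : EReal) = R w := CanLift.prf _ ⟨hRw, hRbot w⟩
  have hmin := hmin w
  have hRu : R u ≠ ⊤ := by
    intro htop
    rw [Tik, Tik, htop, ← hr, EReal.coe_mul_top_of_pos hα,
      EReal.add_top_of_ne_bot (EReal.coe_ne_bot _), top_le_iff, ← EReal.coe_mul,
      ← EReal.coe_add] at hmin
    exact EReal.coe_ne_top _ hmin
  obtain ⟨s, hs⟩ : ∃ s : ℝ, (s : EReal) = R u := CanLift.prf _ ⟨hRu, hRbot u⟩
  rw [Tik, Tik, ← hs, ← hr] at hmin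
  rw [Breg, ← hs, ← hr] at hd
  norm_cast at hmin hd
  nlinarith [mul_le_mul_of_nonneg_left hd hα.le]

theorem pconvex_norm_rate_general
    {U V : Type*} [NormedAddCommGroup U] [InnerProductSpace ℝ U] [CompleteSpace U]
    [NormedAddCommGroup V] [InnerProductSpace ℝ V] [CompleteSpace V]
    (F : U →L[ℝ] V) (R : U → EReal) (hRbot : ∀ u, R u ≠ ⊥)
    (p ν : ℝ) (hp : 1 ≤ p) (hν0 : 0 < ν) (hν1 : ν < 1 / 2)
    (P : U →L[ℝ] U) (hP : IsFractionalPower ((adjoint F).comp F) ν P)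
    (udag : U) (vdag : V) (hud : F udag = vdag)
    (ωdag ξdag : U) (hξ : ξdag = P ωdag) (hsub : IsSubgradient R ξdag udag)
    (M : ℝ) (C₀ : ℝ) (hC₀ : 0 < C₀)
    (hpconv : ∀ w : U, ‖w - udag‖ ≤ M →
      ((C₀ * ‖w - udag‖ ^ p : ℝ) : EReal) ≤ Breg R ξdag w udag)
    (c : ℝ) (hc : 0 < c) :
    ∃ C : ℝ, 0 < C ∧
      ∀ δ : ℝ, 0 < δ → ∀ vδ : V, ‖vdag - vδ‖ ≤ δ →
        ∀ uαδ : U,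
          (∀ u, Tik F R (c * δ ^ ((2 * p - 2 - 2 * p * ν + 4 * ν) / (p - 1 + 2 * ν))) vδ uαδ
              ≤ Tik F R (c * δ ^ ((2 * p - 2 - 2 * p * ν + 4 * ν) / (p - 1 + 2 * ν))) vδ u) →
          ‖uαδ - udag‖ ≤ M →
          ‖uαδ - udag‖ ≤ C * δ ^ (2 * ν / (p - 1 + 2 * ν)) := by
  have hpν : 0 < p - 1 + 2 * ν := by linarith
  refine ⟨((1 + c * ‖ωdag‖) / min (1 / 4) (c * C₀)) ^ (2 / (2 * ν)), by positivity, ?_⟩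
  intro δ hδ vδ hvδ u hmin hu
  set μ := 2 * ν / (p - 1 + 2 * ν)
  have hq : (2 * p - 2 - 2 * p * ν + 4 * ν) / (p - 1 + 2 * ν) = 2 - μ * p := by
    simp only [μ]
    field_simp
    ring
  rw [hq] at hmin
  have hFe : ‖F (u - udag)‖ ≤ ‖F u - vδ‖ + δ :=
    calc ‖F (u - udag)‖ = ‖(F u - vδ) + (vδ - vdag)‖ := by rw [map_sub, hud, sub_add_sub_cancel]
      _ ≤ ‖F u - vδ‖ + δ := (norm_add_le _ _).trans (by rw [norm_sub_rev vδ]; gcongr)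
  have hPe := hP.norm_apply_le (isPositive_adjoint_comp_self F) hν0.le hν1.le (e := u - udag)
    (by positivity : 0 < ‖F u - vδ‖ + δ)
    (by rw [comp_apply, adjoint_inner_left, real_inner_self_eq_norm_sq]; gcongr)
  have hsrc : -⟪ξdag, u - udag⟫ ≤
      ‖ωdag‖ * ((‖F u - vδ‖ + δ) ^ (2 * ν) * ‖u - udag‖ ^ (1 - 2 * ν)) := by
    rw [hξ, ← adjoint_inner_right, hP.adjoint_eq]
    calc -⟪ωdag, P (u - udag)⟫ ≤ ‖ωdag‖ * ‖P (u - udag)‖ :=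
          (neg_le_abs _).trans (abs_real_inner_le_norm _ _)
      _ ≤ _ := by gcongr
  have hvar := tik_minimizer_le (by positivity) hRbot hsub.1.ne hmin (hpconv u hu)
  have hdata : ‖F udag - vδ‖ ^ 2 ≤ δ ^ 2 := hud ▸ pow_le_pow_left₀ (norm_nonneg _) hvδ 2
  have hα : 0 ≤ c * δ ^ (2 - μ * p) := by positivity
  refine le_mul_rpow_of_sq_add_rpow_le hp (by linarith) (by linarith)
    (by simp only [μ]; field_simp)
    (by positivity) (by positivity) hδ (norm_nonneg (F u - vδ)) (norm_nonneg (u - udag)) ?_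
  nlinarith [mul_le_mul_of_nonneg_left hsrc hα]

/-- norm rate under p-convexity,
with `α(δ) = c δ^((2p-2-2pν+4ν)/(p-1+2ν))`. -/
theorem pconvex_norm_rate
    {U V : Type*} [NormedAddCommGroup U] [InnerProductSpace ℝ U] [CompleteSpace U]
    [NormedAddCommGroup V] [InnerProductSpace ℝ V] [CompleteSpace V]
    (F : U →L[ℝ] V) (R : U → EReal) (hRbot : ∀ u, R u ≠ ⊥) (hconv : ErealConvexOn R)
    (p ν : ℝ) (hp : 1 ≤ p) (hν0 : 0 < ν) (hν1 : ν < 1 / 2)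
    (P : U →L[ℝ] U) (hP : IsFractionalPower ((adjoint F).comp F) ν P)
    (udag : U) (vdag : V) (hud : F udag = vdag)
    (ωdag ξdag : U) (hξ : ξdag = P ωdag) (hsub : IsSubgradient R ξdag udag)
    (M : ℝ) (hM : 0 < M) (C₀ : ℝ) (hC₀ : 0 < C₀)
    (hpconv : ∀ w : U, ‖w - udag‖ ≤ M →
      ((C₀ * ‖w - udag‖ ^ p : ℝ) : EReal) ≤ Breg R ξdag w udag)
    (c : ℝ) (hc : 0 < c) :
    ∃ C : ℝ, 0 < C ∧
      ∀ δ : ℝ, 0 < δ → ∀ vδ : V, ‖vdag - vδ‖ ≤ δ →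
        ∀ uαδ : U,
          (∀ u, Tik F R (c * δ ^ ((2 * p - 2 - 2 * p * ν + 4 * ν) / (p - 1 + 2 * ν))) vδ uαδ
              ≤ Tik F R (c * δ ^ ((2 * p - 2 - 2 * p * ν + 4 * ν) / (p - 1 + 2 * ν))) vδ u) →
          ‖uαδ - udag‖ ≤ M →
          ‖uαδ - udag‖ ≤ C * δ ^ (2 * ν / (p - 1 + 2 * ν)) :=
  pconvex_norm_rate_general F R hRbot p ν hp hν0 hν1 P hP udag vdag hud ωdag ξdag hξ hsub M C₀ hC₀
    hpconv c hc
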